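/- arXiv:1807.05263 — 2 statements merged into one kernel-verified Lean document; each statement's English description precedes it below -/
import Mathlib

section
/- Let 𝒜 be a locally λ-presentable category and T : 𝒜 → 𝒜 a λ-accessible functor. Let A, P, Q be λ-presentable objects of 𝒜, p : P → T A, q : P → Q, and let U together with f : T A → U and g : Q → U be the pushout of q along p. Then the object (A, U, f) of the comma category T/𝒜 is λ-presentable. -/
universe v u

open CategoryTheory Limits Opposite

/-- A poset is `κ`-directed if every subset of cardinality `< κ` has an upper bound. -/
def IsCardinalDirected (κ : Cardinal.{v}) (D : Type v) [Preorder D] : Prop :=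
  ∀ S : Set D, Cardinal.mk S < κ → ∃ b : D, ∀ s ∈ S, s ≤ b

variable (C : Type u) [Category.{v} C]

/-- An object `X` is `κ`-presentable if `Hom(X, -)` preserves colimits indexed by
`κ`-directed posets. -/
def IsPresentableObj (κ : Cardinal.{v}) (X : C) : Prop :=
  ∀ (D : Type v) [PartialOrder D], IsCardinalDirected κ D →
    Nonempty (PreservesColimitsOfShape D (coyoneda.obj (op X)))

/-- A functor is `κ`-accessible (between categories that are assumed accessible) if it
preserves colimits indexed by `κ`-directed posets. -/
def PreservesCardinalDirectedColimits {C' : Type*} [Category.{v} C'] (κ : Cardinal.{v})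
    (T : C ⥤ C') : Prop :=
  ∀ (D : Type v) [PartialOrder D], IsCardinalDirected κ D →
    Nonempty (PreservesColimitsOfShape D T)

/-- A category is locally `κ`-presentable if it is cocomplete and has a set of
`κ`-presentable objects generating it under `κ`-directed colimits. -/
def IsLocallyPresentable (κ : Cardinal.{v}) : Prop :=
  HasColimitsOfSize.{v, v} C ∧
  ∃ G : Set C, Small.{v} G ∧ (∀ X ∈ G, IsPresentableObj C κ X) ∧
    ∀ X : C, ∃ (D : Type v) (_ : PartialOrder D), IsCardinalDirected κ D ∧
      ∃ (F : D ⥤ C) (c : Cocone F), (∀ d, F.obj d ∈ G) ∧ c.pt = X ∧ Nonempty (IsColimit c)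

/-!
By the universal property of the pushout `U`, a morphism `(A, U, f) ⟶ (B, V, h)` in `T/𝒜` is
the same as a pair `a : A ⟶ B`, `y : Q ⟶ V` with `p ≫ T a ≫ h = q ≫ y`. Hence
`Hom((A, U, f), -)` is the pullback of `Hom(A, fst -) ⟶ Hom(P, snd -) ⟵ Hom(Q, snd -)`.
These three functors preserve `κ`-directed colimits, because such colimits in `T/𝒜` are
computed componentwise, and `κ`-filtered colimits of types commute with pullbacks.
-/

lemma IsCardinalDirected.isCardinalFiltered {κ : Cardinal.{v}} [Fact κ.IsRegular]
    {D : Type v} [Preorder D] (hD : IsCardinalDirected κ D) : IsCardinalFiltered D κ :=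
  isCardinalFiltered_preorder D κ fun _ s hs ↦
    (hD (Set.range s) (Cardinal.mk_range_le.trans_lt hs)).imp fun _ hb k ↦ hb _ ⟨k, rfl⟩

lemma IsPresentableObj.nonempty_isColimit_mapCocone {E : Type*} [Category.{v} E]
    {κ : Cardinal.{v}} {X : E} (hX : IsPresentableObj E κ X) {D : Type v} [PartialOrder D]
    (hD : IsCardinalDirected κ D) {F : D ⥤ E} {c : Cocone F} (hc : IsColimit c) :
    Nonempty (IsColimit ((coyoneda.obj (op X)).mapCocone c)) :=
  (hX D hD).elim fun _ ↦ ⟨isColimitOfPreserves _ hc⟩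

namespace CategoryTheory

noncomputable def IsPullback.isColimitMapCocone {E : Type*} [Category.{v} E]
    {F₁ F₂ F₃ F₄ : E ⥤ Type v} {t : F₁ ⟶ F₂} {l : F₁ ⟶ F₃} {r : F₂ ⟶ F₄} {b : F₃ ⟶ F₄}
    (h : IsPullback t l r b) (κ : Cardinal.{v}) [Fact κ.IsRegular]
    {J : Type v} [SmallCategory J] [IsCardinalFiltered J κ] {X : J ⥤ E} {cX : Cocone X}
    (h₂ : IsColimit (F₂.mapCocone cX)) (h₃ : IsColimit (F₃.mapCocone cX))
    (h₄ : IsColimit (F₄.mapCocone cX)) : IsColimit (F₁.mapCocone cX) :=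
  Functor.Accessible.Limits.isColimitMapCocone h.cone
    (fun Y ↦ isLimitOfPreserves ((evaluation _ _).obj Y) h.isLimit) κ
    (hasCardinalLT_of_finite _ κ (Cardinal.IsRegular.aleph0_le Fact.out)) cX
    (by rintro (_ | _ | _) <;> assumption)

namespace Comma

variable {B K : Type*} [Category.{v} B] [Category.{v} K] {L : B ⥤ K}

@[simps]
def coyonedaLeft (X : Comma L (𝟭 K)) :
    coyoneda.obj (op X) ⟶ fst L (𝟭 K) ⋙ coyoneda.obj (op X.left) where
  app _ := ↾fun m ↦ m.left

@[simps]
def coyonedaRight (X : Comma L (𝟭 K)) {Q : K} (g : Q ⟶ X.right) :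
    coyoneda.obj (op X) ⟶ snd L (𝟭 K) ⋙ coyoneda.obj (op Q) where
  app _ := ↾fun m ↦ g ≫ m.right

@[simps]
def coyonedaLeftToRight {A : B} {P : K} (p : P ⟶ L.obj A) :
    fst L (𝟭 K) ⋙ coyoneda.obj (op A) ⟶ snd L (𝟭 K) ⋙ coyoneda.obj (op P) where
  app Y := ↾fun a ↦ p ≫ L.map a ≫ Y.hom
  naturality Y Y' φ := by
    ext a
    simp

lemma isPullback_coyoneda_of_isPushout {A : B} {P Q U : K} {p : P ⟶ L.obj A} {q : P ⟶ Q}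
    {f : L.obj A ⟶ U} {g : Q ⟶ U} (hpo : IsPushout p q f g) :
    IsPullback (coyonedaLeft ⟨A, U, f⟩) (coyonedaRight ⟨A, U, f⟩ g) (coyonedaLeftToRight p)
      (Functor.whiskerLeft _ (coyoneda.map q.op)) := by
  refine .of_forall_isPullback_app fun Y ↦ (Types.isPullback_iff _ _ _ _).2 ⟨?_, ?_, ?_⟩
  · ext m
    simp [reassoc_of% hpo.w]
  · rintro m m' ⟨hl, hr⟩
    simp only [coyonedaLeft_app, coyonedaRight_app, TypeCat.ofHom_apply] at hl hr
    refine Comma.hom_ext _ _ hl (hpo.hom_ext ?_ hr)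
    have hm := m.w
    have hm' := m'.w
    dsimp at hm hm'
    rw [← hm, ← hm', hl]
  · intro (a : A ⟶ Y.left) (y : Q ⟶ Y.right) h
    simp only [coyonedaLeftToRight_app, TypeCat.ofHom_apply] at h
    exact ⟨⟨a, hpo.desc (L.map a ≫ Y.hom) y h, by simp⟩, rfl, by simp⟩

end Comma

end CategoryTheory

/-- If `A`, `P`, `Q` are `κ`-presentable, `p : P ⟶ T A`, `q : P ⟶ Q`, and `U` with
`f : T A ⟶ U`, `g : Q ⟶ U` is the pushout of `q` along `p`, then the object `(A, U, f)`
of the comma category `T/𝒜` is `κ`-presentable. -/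
theorem pushout_object_isPresentable (κ : Cardinal.{v}) (hκ : κ.IsRegular)
    (hC : IsLocallyPresentable C κ) (T : C ⥤ C)
    (hT : PreservesCardinalDirectedColimits C κ T)
    (A P Q : C) (hA : IsPresentableObj C κ A) (hP : IsPresentableObj C κ P)
    (hQ : IsPresentableObj C κ Q)
    (p : P ⟶ T.obj A) (q : P ⟶ Q) (U : C) (f : T.obj A ⟶ U) (g : Q ⟶ U)
    (hpo : IsPushout p q f g) :
    IsPresentableObj (Comma T (𝟭 C)) κ
      ({ left := A, right := U, hom := f } : Comma T (𝟭 C)) := by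
  intro D _ hD
  have : Fact κ.IsRegular := ⟨hκ⟩
  have := hD.isCardinalFiltered
  have := hC.1
  obtain ⟨_⟩ := hT D hD
  refine ⟨⟨⟨fun {c} hc ↦ ?_⟩⟩⟩
  have hcLeft := isColimitOfPreserves (Comma.fst T (𝟭 C)) hc
  have hcRight := isColimitOfPreserves (Comma.snd T (𝟭 C)) hc
  obtain ⟨hcA⟩ := hA.nonempty_isColimit_mapCocone hD hcLeft
  obtain ⟨hcP⟩ := hP.nonempty_isColimit_mapCocone hD hcRight
  obtain ⟨hcQ⟩ := hQ.nonempty_isColimit_mapCocone hD hcRight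
  exact ⟨(Comma.isPullback_coyoneda_of_isPushout hpo).isColimitMapCocone κ hcA hcQ hcP⟩
end

section
/- Let 𝒜 be a locally λ-presentable category and T : 𝒜 → 𝒜 a functor that preserves λ-presentable objects and λ-directed colimits. Then the comma category 𝒜/T = Id ↓ T (objects: triples (A, B, f : A → T B)) is locally λ-presentable. -/
/-!
Colimits in `Id ↓ T` are computed componentwise. For `X = (A, B, f)`, a morphism `X ⟶ Y` is a
pair `(u, v)` subject to one equation in `Hom(A, T Y.right)`; when `A` and `B` are
`κ`-presentable and `T` preserves `κ`-directed colimits, the pair and the equation both pass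
through a `κ`-directed colimit, so `X` is `κ`-presentable.

Conversely, write `A = colim Aₑ` and `B = colim B_d` as `κ`-directed colimits of presentable
objects. The triples `(e, d, g : Aₑ ⟶ T B_d)` through which `f` factors form a `κ`-directed poset:
an upper bound of fewer than `κ` triples is found by first bounding the indices, then factoring
through `T B = colim T B_d` (as `Aₑ` is presentable), and finally equalizing the fewer than `κ`
pairs of maps that agree in the colimit. Both projections from this poset are cofinal, so
`(A, B, f)` is the colimit of the triples `(Aₑ, B_d, g)`.
-/
universe v u

open CategoryTheory Limits Opposite

variable (C : Type u) [Category.{v} C]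

section

open Cardinal

variable {C}

namespace IsCardinalDirected

variable {κ : Cardinal.{v}} {D : Type v} [Preorder D]

lemma nonempty (hD : IsCardinalDirected κ D) (hκ : κ ≠ 0) : Nonempty D := by
  obtain ⟨b, -⟩ := hD ∅ (by simpa using hκ.bot_lt)
  exact ⟨b⟩

lemma isDirectedOrder (hD : IsCardinalDirected κ D) (hκ : ℵ₀ ≤ κ) : IsDirectedOrder D where
  directed a b := by
    obtain ⟨c, hc⟩ := hD {a, b} ((Set.toFinite _).lt_aleph0.trans_le hκ)
    exact ⟨c, hc a (by simp), hc b (by simp)⟩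

lemma exists_forall_le (hD : IsCardinalDirected κ D) {ι : Type v} (x : ι → D)
    (hι : Cardinal.mk ι < κ) : ∃ b, ∀ i, x i ≤ b := by
  obtain ⟨b, hb⟩ := hD (Set.range x) (Cardinal.mk_range_le.trans_lt hι)
  exact ⟨b, fun i => hb _ ⟨i, rfl⟩⟩

end IsCardinalDirected

variable {B : Type*} [Category.{v} B] {T : B ⥤ C}

namespace CategoryTheory.Comma

section

variable {J : Type*} [Category* J] [IsFiltered J] [HasColimitsOfShape J C]
  [HasColimitsOfShape J B] {F : J ⥤ Comma (𝟭 C) T} {c : Cocone F} {X : Comma (𝟭 C) T}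

lemma exists_hom_of_isColimit [PreservesColimitsOfShape J T] (hc : IsColimit c)
    [PreservesColimitsOfShape J (coyoneda.obj (op X.left))]
    [PreservesColimitsOfShape J (coyoneda.obj (op X.right))] (x : X ⟶ c.pt) :
    ∃ (k : J) (φ : X ⟶ F.obj k), φ ≫ c.ι.app k = x := by
  have hL := isColimitOfPreserves (fst (𝟭 C) T) hc
  have hR := isColimitOfPreserves (snd (𝟭 C) T) hc
  obtain ⟨j₁, u, hu⟩ := exists_hom_of_preservesColimit_coyoneda hL x.left
  obtain ⟨j₂, v, hv⟩ := exists_hom_of_preservesColimit_coyoneda hR x.right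
  obtain ⟨j, s₁, s₂, -⟩ := IsFilteredOrEmpty.cocone_objs j₁ j₂
  obtain ⟨u', hu'⟩ : ∃ u' : X.left ⟶ (F.obj j).left, u' ≫ (c.ι.app j).left = x.left :=
    ⟨u ≫ (F.map s₁).left, by rw [Category.assoc, ← comp_left, c.w, ← hu]; rfl⟩
  obtain ⟨v', hv'⟩ : ∃ v' : X.right ⟶ (F.obj j).right, v' ≫ (c.ι.app j).right = x.right :=
    ⟨v ≫ (F.map s₂).right, by rw [Category.assoc, ← comp_right, c.w, ← hv]; rfl⟩
  -- `(u', v')` is a morphism of `𝒜/T` only after passing to a later stage.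
  obtain ⟨k, t, ht⟩ := exists_eq_of_preservesColimit_coyoneda_self
    (isColimitOfPreserves T hR) (u' ≫ (F.obj j).hom) (X.hom ≫ T.map v')
    (by simpa [← (c.ι.app j).w, reassoc_of% hu', ← Functor.map_comp, hv'] using x.w)
  refine ⟨k, ⟨u' ≫ (F.map t).left, v' ≫ (F.map t).right, by simpa [← (F.map t).w] using ht⟩, ?_⟩
  ext
  · rw [comp_left, Category.assoc, ← comp_left, c.w, hu']
  · rw [comp_right, Category.assoc, ← comp_right, c.w, hv']

lemma exists_eq_of_isColimit (hc : IsColimit c)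
    [PreservesColimitsOfShape J (coyoneda.obj (op X.left))]
    [PreservesColimitsOfShape J (coyoneda.obj (op X.right))] {j : J} (φ ψ : X ⟶ F.obj j)
    (h : φ ≫ c.ι.app j = ψ ≫ c.ι.app j) : ∃ (k : J) (t : j ⟶ k), φ ≫ F.map t = ψ ≫ F.map t := by
  obtain ⟨j₁, s, hs⟩ := exists_eq_of_preservesColimit_coyoneda_self
    (isColimitOfPreserves (fst (𝟭 C) T) hc) φ.left ψ.left
    (by simpa using congr_arg CommaMorphism.left h)
  obtain ⟨k, t, ht⟩ := exists_eq_of_preservesColimit_coyoneda_self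
    (isColimitOfPreserves (snd (𝟭 C) T) hc) (φ ≫ F.map s).right (ψ ≫ F.map s).right
    (by simpa [← comp_right] using congr_arg CommaMorphism.right h)
  refine ⟨k, s ≫ t, ?_⟩
  ext
  · simpa using hs =≫ (F.map t).left
  · simpa using ht

lemma preservesColimitsOfShape_coyoneda [PreservesColimitsOfShape J T] (X : Comma (𝟭 C) T)
    [PreservesColimitsOfShape J (coyoneda.obj (op X.left))]
    [PreservesColimitsOfShape J (coyoneda.obj (op X.right))] :
    PreservesColimitsOfShape J (coyoneda.obj (op X)) where
  preservesColimit := ⟨fun hc => ⟨Types.FilteredColimit.isColimitOf' _ _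
    (fun x => (exists_hom_of_isColimit hc x).imp fun _ ⟨φ, hφ⟩ => ⟨φ, hφ.symm⟩)
    (fun _ φ ψ h => exists_eq_of_isColimit hc φ ψ h)⟩⟩

end

lemma isPresentableObj [HasColimitsOfSize.{v, v} C] [HasColimitsOfSize.{v, v} B]
    {κ : Cardinal.{v}} (hκ : ℵ₀ ≤ κ) (hT : PreservesCardinalDirectedColimits B κ T)
    {X : Comma (𝟭 C) T} (hl : IsPresentableObj C κ X.left) (hr : IsPresentableObj B κ X.right) :
    IsPresentableObj (Comma (𝟭 C) T) κ X := fun D _ hD =>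
  have := hD.nonempty (aleph0_pos.trans_le hκ).ne'
  have := hD.isDirectedOrder hκ
  have := (hT D hD).some
  have := (hl D hD).some
  have := (hr D hD).some
  ⟨preservesColimitsOfShape_coyoneda X⟩

lemma small_setOf_left_mem_and_right_mem (G : Set C) (G' : Set B) [Small.{v} G] [Small.{v} G'] :
    Small.{v} {X : Comma (𝟭 C) T | X.left ∈ G ∧ X.right ∈ G'} := by
  have : {X : Comma (𝟭 C) T | X.left ∈ G ∧ X.right ∈ G'} =
      Set.range fun x : Σ p : G × G', (p.1 : C) ⟶ T.obj (p.2 : B) =>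
        (⟨x.1.1, x.1.2, x.2⟩ : Comma (𝟭 C) T) := by
    ext X
    constructor
    · rintro ⟨hl, hr⟩
      exact ⟨⟨(⟨_, hl⟩, ⟨_, hr⟩), X.hom⟩, rfl⟩
    · rintro ⟨x, rfl⟩
      exact ⟨x.1.1.2, x.1.2.2⟩
  rw [this]
  infer_instance

end CategoryTheory.Comma

variable {E D : Type v} [PartialOrder E] [PartialOrder D] {FA : E ⥤ C} {FB : D ⥤ B}

variable (T) in
structure LiftIndex (a : Cocone FA) (b : Cocone FB) (f : a.pt ⟶ T.obj b.pt) where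
  left : E
  right : D
  hom : FA.obj left ⟶ T.obj (FB.obj right)
  w : hom ≫ T.map (b.ι.app right) = a.ι.app left ≫ f

namespace LiftIndex

variable {a : Cocone FA} {b : Cocone FB} {f : a.pt ⟶ T.obj b.pt}

instance : PartialOrder (LiftIndex T a b f) where
  le p q := ∃ (hl : p.left ≤ q.left) (hr : p.right ≤ q.right),
    p.hom ≫ T.map (FB.map (homOfLE hr)) = FA.map (homOfLE hl) ≫ q.hom
  le_refl p := ⟨le_rfl, le_rfl, by simp⟩
  le_trans p q r := fun ⟨hl, hr, w⟩ ⟨hl', hr', w'⟩ => ⟨hl.trans hl', hr.trans hr', by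
    rw [← homOfLE_comp hl hl', ← homOfLE_comp hr hr', FB.map_comp, T.map_comp, reassoc_of% w,
      w', FA.map_comp, Category.assoc]⟩
  le_antisymm := by
    rintro ⟨l, r, g, _⟩ ⟨l', r', g', _⟩ ⟨hl, hr, w⟩ ⟨hl', hr', -⟩
    obtain rfl := le_antisymm hl hl'
    obtain rfl := le_antisymm hr hr'
    simpa using w

lemma monotone_left : Monotone (left : LiftIndex T a b f → E) := fun _ _ h => h.1

lemma monotone_right : Monotone (right : LiftIndex T a b f → D) := fun _ _ h => h.2.1

lemma hom_comp_map_of_le {p q : LiftIndex T a b f} (h : p ≤ q) :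
    p.hom ≫ T.map (FB.map (homOfLE (monotone_right h))) =
      FA.map (homOfLE (monotone_left h)) ≫ q.hom :=
  h.2.2

abbrev mapRight (p : LiftIndex T a b f) {d : D} (h : p.right ≤ d) : LiftIndex T a b f where
  left := p.left
  right := d
  hom := p.hom ≫ T.map (FB.map (homOfLE h))
  w := by rw [Category.assoc, ← T.map_comp, b.w, p.w]

lemma mapRight_le_mapRight (p : LiftIndex T a b f) {d d' : D} (h : p.right ≤ d)
    (h' : p.right ≤ d') (hd : d ≤ d') : p.mapRight h ≤ p.mapRight h' :=
  ⟨le_rfl, hd, by simp [← T.map_comp, ← FB.map_comp]⟩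

variable (a b f) in
def diagram : LiftIndex T a b f ⥤ Comma (𝟭 C) T where
  obj p := ⟨FA.obj p.left, FB.obj p.right, p.hom⟩
  map {p q} h := ⟨FA.map (monotone_left.functor.map h), FB.map (monotone_right.functor.map h),
    (hom_comp_map_of_le (leOfHom h)).symm⟩
  map_comp _ _ := by ext; exacts [FA.map_comp _ _, FB.map_comp _ _]

variable (a b f) in
def cocone : Cocone (diagram a b f) where
  pt := ⟨a.pt, b.pt, f⟩
  ι :=
    { app p := ⟨a.ι.app p.left, b.ι.app p.right, p.w.symm⟩
      naturality _ _ _ := by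
        ext
        · exact (a.w _).trans (Category.comp_id _).symm
        · exact (b.w _).trans (Category.comp_id _).symm }

variable [PreservesColimitsOfShape D T]
  [∀ e, PreservesColimitsOfShape D (coyoneda.obj (op (FA.obj e)))]

lemma exists_left_eq (hb : IsColimit b) (e : E) : ∃ p : LiftIndex T a b f, p.left = e := by
  obtain ⟨d, g, hg⟩ := exists_hom_of_preservesColimit_coyoneda (isColimitOfPreserves T hb)
    (a.ι.app e ≫ f)
  exact ⟨⟨e, d, g, hg⟩, rfl⟩

lemma exists_le_mapRight [IsFiltered D] (hb : IsColimit b) {p q : LiftIndex T a b f}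
    (hl : p.left ≤ q.left) (hr : p.right ≤ q.right) :
    ∃ (d : D) (h : q.right ≤ d), p ≤ q.mapRight h := by
  obtain ⟨d, t, ht⟩ := exists_eq_of_preservesColimit_coyoneda_self (isColimitOfPreserves T hb)
    (p.hom ≫ T.map (FB.map (homOfLE hr))) (FA.map (homOfLE hl) ≫ q.hom)
    (by simp only [Functor.mapCocone_ι_app, Category.assoc, ← T.map_comp, b.w, p.w, q.w,
      a.w_assoc])
  refine ⟨d, leOfHom t, hl, hr.trans (leOfHom t), ?_⟩
  simp only [Functor.comp_map, Category.assoc, ← T.map_comp, ← FB.map_comp] at ht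
  exact ht

lemma isCardinalDirected {κ : Cardinal.{v}} (hκ : ℵ₀ ≤ κ) (hE : IsCardinalDirected κ E)
    (hD : IsCardinalDirected κ D) (hb : IsColimit b) :
    IsCardinalDirected κ (LiftIndex T a b f) := by
  have := hD.nonempty (aleph0_pos.trans_le hκ).ne'
  have := hD.isDirectedOrder hκ
  intro S hS
  obtain ⟨e, he⟩ := hE.exists_forall_le (fun s : S => s.1.left) hS
  obtain ⟨d, hd⟩ := hD.exists_forall_le (fun s : S => s.1.right) hS
  obtain ⟨p, rfl⟩ := exists_left_eq (f := f) hb e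
  obtain ⟨d', hdd', hpd'⟩ := exists_ge_ge d p.right
  set q := p.mapRight hpd'
  have hq : ∀ s : S, ∃ (d'' : D) (h : q.right ≤ d''), s.1 ≤ q.mapRight h :=
    fun s => exists_le_mapRight hb (he s) ((hd s).trans hdd')
  choose ds hds hsq using hq
  obtain ⟨dmax, hdmax⟩ := hD.exists_forall_le ds hS
  obtain ⟨r, hr, hqr⟩ := exists_ge_ge dmax q.right
  exact ⟨q.mapRight hqr, fun s hs =>
    (hsq ⟨s, hs⟩).trans (q.mapRight_le_mapRight _ _ ((hdmax _).trans hr))⟩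

noncomputable def isColimitCocone {κ : Cardinal.{v}} (hκ : ℵ₀ ≤ κ) (hE : IsCardinalDirected κ E)
    (hD : IsCardinalDirected κ D) (ha : IsColimit a) (hb : IsColimit b) :
    IsColimit (cocone a b f) := by
  have hP := isCardinalDirected (f := f) hκ hE hD hb
  have := hP.isDirectedOrder hκ
  have := hD.isDirectedOrder hκ
  have : (monotone_left (a := a) (b := b) (f := f)).functor.Final :=
    (Monotone.final_functor_iff _).2 fun e =>
      (exists_left_eq hb e).imp fun p hp => hp.ge
  have : (monotone_right (a := a) (b := b) (f := f)).functor.Final :=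
    (Monotone.final_functor_iff _).2 fun d => by
      obtain ⟨p⟩ := hP.nonempty (aleph0_pos.trans_le hκ).ne'
      obtain ⟨d', hd, hpd⟩ := exists_ge_ge d p.right
      exact ⟨p.mapRight hpd, hd⟩
  exact Comma.fstSndJointlyReflectColimit
    ((Functor.Final.isColimitWhiskerEquiv monotone_left.functor a).symm ha)
    ((Functor.Final.isColimitWhiskerEquiv monotone_right.functor b).symm hb)

end LiftIndex

end

theorem comma_id_isLocallyPresentable (κ : Cardinal.{v}) (hκ : κ.IsRegular)
    (h : IsLocallyPresentable C κ) (T : C ⥤ C)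
    (hT : PreservesCardinalDirectedColimits C κ T) :
    IsLocallyPresentable (Comma (𝟭 C) T) κ := by
  obtain ⟨hC, G, hG, hpres, hgen⟩ := h
  refine ⟨inferInstance, {X | X.left ∈ G ∧ X.right ∈ G},
    Comma.small_setOf_left_mem_and_right_mem G G,
    fun X hX => Comma.isPresentableObj hκ.aleph0_le hT (hpres _ hX.1) (hpres _ hX.2), ?_⟩
  rintro ⟨A, B, f⟩
  obtain ⟨E, _, hE, FA, a, haG, rfl, ⟨ha⟩⟩ := hgen A
  obtain ⟨D, _, hD, FB, b, hbG, rfl, ⟨hb⟩⟩ := hgen B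
  have := (hT D hD).some
  have := fun e => (hpres _ (haG e) D hD).some
  exact ⟨LiftIndex T a b f, inferInstance, LiftIndex.isCardinalDirected hκ.aleph0_le hE hD hb,
    LiftIndex.diagram a b f, LiftIndex.cocone a b f, fun p => ⟨haG _, hbG _⟩, rfl,
    ⟨LiftIndex.isColimitCocone hκ.aleph0_le hE hD ha hb⟩⟩
end
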